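/- Let p, q : Ω → ℝ be nonnegative functions on a measurable space with measure μ, and D : Ω → ℝ a measurable function with 0 < D(ω) < 1 for all ω. Then pointwise, p(ω)·log(D(ω)) + q(ω)·log(1 − D(ω)) ≤ p(ω)·log(p(ω)/(p(ω)+q(ω))) + q(ω)·log(q(ω)/(p(ω)+q(ω))) whenever p(ω) > 0 and q(ω) > 0; consequently the integrand of the GAN objective is pointwise maximized by D*(ω) = p(ω)/(p(ω)+q(ω)). -/
import Mathlib

lemma key_ineq (a b c : ℝ) (ha : 0 < a) (hb : 0 < b) (hc : 0 < c) (hc1 : c < 1) :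
    a * Real.log c + b * Real.log (1 - c) ≤
      a * Real.log (a / (a + b)) + b * Real.log (b / (a + b)) := by
  have hab : 0 < a + b := by linarith
  have hc' : 0 < 1 - c := by linarith
  have h1 : Real.log c - Real.log (a / (a + b)) = Real.log (c * (a + b) / a) := by
    rw [Real.log_div (by positivity) ha.ne', Real.log_mul hc.ne' hab.ne',
      Real.log_div ha.ne' hab.ne']
    ring
  have h2 : Real.log (1 - c) - Real.log (b / (a + b)) = Real.log ((1 - c) * (a + b) / b) := by
    rw [Real.log_div (by positivity) hb.ne', Real.log_mul hc'.ne' hab.ne',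
      Real.log_div hb.ne' hab.ne']
    ring
  have l1 : Real.log (c * (a + b) / a) ≤ c * (a + b) / a - 1 :=
    Real.log_le_sub_one_of_pos (by positivity)
  have l2 : Real.log ((1 - c) * (a + b) / b) ≤ (1 - c) * (a + b) / b - 1 :=
    Real.log_le_sub_one_of_pos (by positivity)
  have e1 : a * (c * (a + b) / a - 1) = c * (a + b) - a := by field_simp
  have e2 : b * ((1 - c) * (a + b) / b - 1) = (1 - c) * (a + b) - b := by field_simp
  nlinarith [mul_le_mul_of_nonneg_left l1 ha.le, mul_le_mul_of_nonneg_left l2 hb.le,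
    mul_le_mul_of_nonneg_left h1.le ha.le, mul_le_mul_of_nonneg_left h1.ge ha.le,
    mul_le_mul_of_nonneg_left h2.le hb.le, mul_le_mul_of_nonneg_left h2.ge hb.le]

theorem gan_pointwise_optimal_discriminator {Ω : Type*} [MeasurableSpace Ω]
    (μ : MeasureTheory.Measure Ω) (p q D : Ω → ℝ)
    (hp : ∀ ω, 0 ≤ p ω) (hq : ∀ ω, 0 ≤ q ω) (hD : Measurable D)
    (hD01 : ∀ ω, 0 < D ω ∧ D ω < 1) :
    ∀ ω, 0 < p ω → 0 < q ω →
      p ω * Real.log (D ω) + q ω * Real.log (1 - D ω) ≤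
        p ω * Real.log (p ω / (p ω + q ω)) + q ω * Real.log (q ω / (p ω + q ω)) := by
  intro ω hpω hqω
  exact key_ineq _ _ _ hpω hqω (hD01 ω).1 (hD01 ω).2
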